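/- arXiv:1301.5078 — 3 statements merged into one kernel-verified Lean document; each statement's English description precedes it below -/
import Mathlib

section
/- Let γ>1, C>0, let α : ℕ → ℂ satisfy |α_n| ≤ C·exp(−n^γ) for all n ≥ 1, and let F be a Jost solution for α. Then for every z ∈ ℂ with |z| ≥ 1, ‖F(z,0)‖ ≤ exp(C + 2·K(z)·log|z|) · ∏_{n=1}^∞ (1+|α_n|), where K(z) = ⌊(log(2|z|²))^{1/(γ−1)}⌋ and the infinite product converges by the decay assumption. -/
open Complex Filter
open scoped ComplexConjugate Topology

noncomputable section

def cmvZeta (n : ℕ) (z : ℂ) : ℂ := if Odd n then z else 1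

def enorm2 (v : ℂ × ℂ) : ℝ := Real.sqrt (‖v.1‖ ^ 2 + ‖v.2‖ ^ 2)

def IsJostSolution (α : ℕ → ℂ) (F : ℂ → ℕ → ℂ × ℂ) : Prop :=
  (∀ z : ℂ, ∃ M : ℝ, ∀ k : ℕ, enorm2 (F z k) ≤ M) ∧
  ∀ (z : ℂ) (k : ℕ),
    Summable (fun n : ℕ => ‖α (k + 1 + n) * cmvZeta (k + 1 + n) z * (F z (k + 1 + n)).2‖) ∧
    Summable (fun n : ℕ => ‖z ^ n * conj (α (k + 1 + n)) * cmvZeta (k + 1) z * (F z (k + 1 + n)).1‖) ∧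
    (F z k).1 = 1 - ∑' n : ℕ, α (k + 1 + n) * cmvZeta (k + 1 + n) z * (F z (k + 1 + n)).2 ∧
    (F z k).2 = - ∑' n : ℕ, z ^ n * conj (α (k + 1 + n)) * cmvZeta (k + 1) z * (F z (k + 1 + n)).1

def SuperExpDecay (γ C : ℝ) (α : ℕ → ℂ) : Prop :=
  ∀ n : ℕ, 1 ≤ n → ‖α n‖ ≤ C * Real.exp (-(n : ℝ) ^ γ)

def MemB0 (γ C Q : ℝ) (α : ℕ → ℂ) : Prop :=
  (∀ k : ℕ, 1 ≤ k → ‖α k‖ < 1) ∧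
  SuperExpDecay γ C α ∧
  1 / Q ≤ ∏' j : ℕ, (1 - ‖α (j + 1)‖)

def jostPi (F : ℂ → ℕ → ℂ × ℂ) (z : ℂ) : ℂ := (F z 0).1 - (F z 0).2

def HasZeroOrder (f : ℂ → ℂ) (w : ℂ) (m : ℕ) : Prop :=
  ∃ g : ℂ → ℂ, AnalyticAt ℂ g w ∧ g w ≠ 0 ∧ ∀ᶠ x in 𝓝 w, f x = (x - w) ^ m * g x

def CMVStep (α : ℕ → ℂ) (z : ℂ) (k : ℕ) (prev cur : ℂ × ℂ) : Prop :=
  if Odd k then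
    cur.1 = (α k * prev.1 + z * prev.2) / ((Real.sqrt (1 - ‖α k‖ ^ 2) : ℝ) : ℂ) ∧
    cur.2 = (prev.1 / z + conj (α k) * prev.2) / ((Real.sqrt (1 - ‖α k‖ ^ 2) : ℝ) : ℂ)
  else
    cur.1 = (conj (α k) * prev.1 + prev.2) / ((Real.sqrt (1 - ‖α k‖ ^ 2) : ℝ) : ℂ) ∧
    cur.2 = (prev.1 + α k * prev.2) / ((Real.sqrt (1 - ‖α k‖ ^ 2) : ℝ) : ℂ)

end

/-!
Write `r = ‖z‖`. Past `K = ⌊(log (2 r²)) ^ (1 / (γ - 1))⌋` one has `n log (2 r²) < n ^ γ`, so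
`|α n| r ^ (2 n) ≤ C 2⁻ⁿ`. On `[K, ∞)` the defining series then give the Volterra inequality
`‖F k‖ ≤ 1 + ∑_{n > k} C 2⁻ⁿ ‖F n‖`, and a discrete Gronwall argument (using that `F` is
bounded) yields `‖F K‖ ≤ exp (C 2⁻ᴷ) ≤ exp C`. Below `K` we use the one-step recurrence
`F k = T_k F (k + 1)` with `‖T_k‖ ≤ r² (1 + |α (k + 1)|)`, which costs the factor `r ^ (2 K)`
and a partial product of `∏ (1 + |α n|)`.
-/

lemma enorm2_eq_norm_toLp (v : ℂ × ℂ) : enorm2 v = ‖WithLp.toLp 2 v‖ := by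
  rw [WithLp.prod_norm_eq_of_L2]; rfl

lemma enorm2_nonneg (v : ℂ × ℂ) : 0 ≤ enorm2 v := Real.sqrt_nonneg _

lemma enorm2_add_le (v w : ℂ × ℂ) : enorm2 (v + w) ≤ enorm2 v + enorm2 w := by
  simp only [enorm2_eq_norm_toLp, WithLp.toLp_add, norm_add_le]

lemma enorm2_sub_le (v w : ℂ × ℂ) : enorm2 (v - w) ≤ enorm2 v + enorm2 w := by
  simp only [enorm2_eq_norm_toLp, WithLp.toLp_sub, norm_sub_le]

lemma enorm2_swap (v : ℂ × ℂ) : enorm2 v.swap = enorm2 v := by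
  simp only [enorm2, Prod.fst_swap, Prod.snd_swap, add_comm]

lemma enorm2_le_mul_of_le {v w : ℂ × ℂ} {c : ℝ} (hc : 0 ≤ c)
    (h₁ : ‖v.1‖ ≤ c * ‖w.1‖) (h₂ : ‖v.2‖ ≤ c * ‖w.2‖) : enorm2 v ≤ c * enorm2 w := by
  rw [enorm2, enorm2, ← Real.sqrt_sq hc, ← Real.sqrt_mul (sq_nonneg c)]
  gcongr
  nlinarith [pow_le_pow_left₀ (norm_nonneg _) h₁ 2, pow_le_pow_left₀ (norm_nonneg _) h₂ 2]

lemma HasSum.enorm2_le {f : ℕ → ℂ × ℂ} {a : ℂ × ℂ} (hf : HasSum f a)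
    (hnorm : Summable fun n => enorm2 (f n)) : enorm2 a ≤ ∑' n, enorm2 (f n) := by
  have hLp : HasSum (fun n => WithLp.toLp 2 (f n)) (WithLp.toLp 2 a) :=
    hf.mapL (WithLp.prodContinuousLinearEquiv 2 ℂ ℂ ℂ).symm.toContinuousLinearMap
  simp only [enorm2_eq_norm_toLp] at hnorm ⊢
  rw [← hLp.tsum_eq]
  exact norm_tsum_le_tsum_norm hnorm

noncomputable def tailSum (d : ℕ → ℝ) (k : ℕ) : ℝ := ∑' m, d (k + 1 + m)

section TailSum

variable {d N Q : ℕ → ℝ}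

lemma Summable.comp_add_left (hd : Summable d) (k : ℕ) : Summable fun m => d (k + m) :=
  hd.comp_injective (add_right_injective k)

lemma tailSum_nonneg (hd0 : 0 ≤ d) (k : ℕ) : 0 ≤ tailSum d k :=
  tsum_nonneg fun _ => hd0 _

lemma tailSum_le_tsum (hd0 : 0 ≤ d) (hd : Summable d) (k : ℕ) : tailSum d k ≤ ∑' n, d n :=
  tsum_comp_le_tsum_of_inj hd hd0 (add_right_injective (k + 1))

lemma tailSum_eq_add (hd : Summable d) (k : ℕ) : tailSum d k = d (k + 1) + tailSum d (k + 1) := by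
  rw [tailSum, (hd.comp_add_left (k + 1)).tsum_eq_zero_add, tailSum]
  simp only [add_zero, ← add_assoc, add_right_comm _ _ 1]

lemma tendsto_tailSum (d : ℕ → ℝ) : Tendsto (tailSum d) atTop (𝓝 0) := by
  refine ((tendsto_sum_nat_add d).comp (tendsto_add_atTop_nat 1)).congr fun k => ?_
  simp only [Function.comp_apply, tailSum, add_comm]

lemma summable_mul_of_bounded (hd0 : 0 ≤ d) (hd : Summable d) {M : ℝ} (hN0 : 0 ≤ N)
    (hNM : ∀ n, N n ≤ M) : Summable (d * N) :=
  (hd.mul_right M).of_nonneg_of_le (fun n => mul_nonneg (hd0 n) (hN0 n))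
    fun n => mul_le_mul_of_nonneg_left (hNM n) (hd0 n)

lemma tailSum_sub (hd : Summable d) (hN : Summable N) (k : ℕ) :
    tailSum (d - N) k = tailSum d k - tailSum N k :=
  (hd.comp_add_left (k + 1)).tsum_sub (hN.comp_add_left (k + 1))

/-- Telescoping: `d (k + 1) * exp (tailSum d (k + 1)) ≤ exp (tailSum d k) - exp (tailSum d (k + 1))`
because `tailSum d k = d (k + 1) + tailSum d (k + 1)` and `1 + x ≤ exp x`. -/
lemma one_add_tailSum_mul_exp_tailSum_le (hd0 : 0 ≤ d) (hd : Summable d) (k : ℕ) :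
    1 + tailSum (d * fun n => Real.exp (tailSum d n)) k ≤ Real.exp (tailSum d k) := by
  set Q := fun n => Real.exp (tailSum d n)
  have hstep : ∀ n, d (n + 1) * Q (n + 1) ≤ Q n - Q (n + 1) := by
    intro n
    have h := Real.add_one_le_exp (d (n + 1))
    have hQ : Q n = Real.exp (d (n + 1)) * Q (n + 1) := by
      simp only [Q, tailSum_eq_add hd n, Real.exp_add]
    nlinarith [Real.exp_pos (tailSum d (n + 1))]
  suffices tailSum (d * Q) k ≤ Q k - 1 by linarith
  refine Real.tsum_le_of_sum_range_le
    (fun m => mul_nonneg (hd0 _) (Real.exp_pos _).le) fun j => ?_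
  calc ∑ m ∈ Finset.range j, d (k + 1 + m) * Q (k + 1 + m)
      ≤ ∑ m ∈ Finset.range j, (Q (k + m) - Q (k + m + 1)) :=
        Finset.sum_le_sum fun m _ => by simpa only [add_right_comm k 1 m] using hstep (k + m)
    _ = Q k - Q (k + j) := Finset.sum_range_sub' (fun m => Q (k + m)) j
    _ ≤ Q k - 1 := by
        gcongr
        exact Real.one_le_exp (tailSum_nonneg hd0 _)

/-- `e = N - Q` satisfies `e ≤ tailSum (d * e)` on `[K, ∞)`. Where the tail of `d` is at most `1/2`
this is a contraction, so `e ≤ 0` there; the finitely many remaining indices follow by downward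
induction. -/
theorem le_of_le_one_add_tailSum (hd0 : 0 ≤ d) (hd : Summable d) {M : ℝ}
    (hN0 : 0 ≤ N) (hNM : ∀ n, N n ≤ M) (hQ0 : 0 ≤ Q) (hQM : ∀ n, Q n ≤ M) {K : ℕ}
    (hsub : ∀ k, K ≤ k → N k ≤ 1 + tailSum (d * N) k)
    (hsup : ∀ k, K ≤ k → 1 + tailSum (d * Q) k ≤ Q k) :
    ∀ k, K ≤ k → N k ≤ Q k := by
  have hM : 0 ≤ M := (hN0 0).trans (hNM 0)
  have hsumN := summable_mul_of_bounded hd0 hd hN0 hNM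
  have hsumQ := summable_mul_of_bounded hd0 hd hQ0 hQM
  have hsum : Summable (d * (N - Q)) := by rw [mul_sub]; exact hsumN.sub hsumQ
  have hdiff : ∀ k, K ≤ k → N k - Q k ≤ tailSum (d * (N - Q)) k := by
    intro k hk
    rw [mul_sub, tailSum_sub hsumN hsumQ]
    linarith [hsub k hk, hsup k hk]
  obtain ⟨k₀, hk₀⟩ := eventually_atTop.1
    ((tendsto_tailSum d).eventually (ge_mem_nhds (by norm_num : (0 : ℝ) < 1 / 2)))
  have hcontract : ∀ j : ℕ, ∀ k, max K k₀ ≤ k → N k - Q k ≤ (1 / 2) ^ j * M := by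
    intro j
    induction j with
    | zero =>
      intro k _
      rw [pow_zero, one_mul]
      linarith [hNM k, show 0 ≤ Q k from hQ0 k]
    | succ j ih =>
      intro k hk
      calc N k - Q k ≤ tailSum (d * (N - Q)) k := hdiff k (le_of_max_le_left hk)
        _ ≤ tailSum d k * ((1 / 2) ^ j * M) := by
          rw [tailSum, tailSum, ← tsum_mul_right]
          refine (hsum.comp_add_left (k + 1)).tsum_le_tsum (fun m => ?_)
            ((hd.comp_add_left (k + 1)).mul_right _)
          exact mul_le_mul_of_nonneg_left (ih _ (by omega)) (hd0 _)
        _ ≤ 1 / 2 * ((1 / 2) ^ j * M) := by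
          gcongr
          exact hk₀ k (le_of_max_le_right hk)
        _ = (1 / 2) ^ (j + 1) * M := by ring
  have hfar : ∀ k, max K k₀ ≤ k → N k ≤ Q k := fun k hk =>
    sub_nonpos.1 <| ge_of_tendsto'
      (by simpa using (tendsto_pow_atTop_nhds_zero_of_lt_one (by norm_num : (0 : ℝ) ≤ 1 / 2)
        (by norm_num)).mul_const M) fun j => hcontract j k hk
  intro k hk
  induction hgap : max K k₀ - k using Nat.strong_induction_on generalizing k with
  | _ gap ih =>
    by_cases hfar_k : max K k₀ ≤ k
    · exact hfar k hfar_k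
    · have htail : tailSum (d * (N - Q)) k ≤ 0 := tsum_nonpos fun m =>
        mul_nonpos_of_nonneg_of_nonpos (hd0 _)
          (sub_nonpos.2 (ih _ (by omega) _ (by omega) rfl))
      linarith [hdiff k hk]

theorem le_exp_tailSum_of_le_one_add_tailSum (hd0 : 0 ≤ d) (hd : Summable d) {M : ℝ}
    (hN0 : 0 ≤ N) (hNM : ∀ n, N n ≤ M) {K : ℕ}
    (hsub : ∀ k, K ≤ k → N k ≤ 1 + tailSum (d * N) k) :
    N K ≤ Real.exp (tailSum d K) :=
  le_of_le_one_add_tailSum hd0 hd (M := max M (Real.exp (∑' n, d n))) hN0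
    (fun n => (hNM n).trans (le_max_left _ _)) (fun _ => (Real.exp_pos _).le)
    (fun n => (Real.exp_le_exp.2 (tailSum_le_tsum hd0 hd n)).trans (le_max_right _ _)) hsub
    (fun k _ => one_add_tailSum_mul_exp_tailSum_le hd0 hd k) K le_rfl

end TailSum

lemma norm_cmvZeta_le {z : ℂ} (hz : 1 ≤ ‖z‖) (n : ℕ) : ‖cmvZeta n z‖ ≤ ‖z‖ := by
  unfold cmvZeta; split_ifs <;> simp [hz]

lemma mul_cmvZeta (z : ℂ) (n : ℕ) : z * cmvZeta n z = cmvZeta n z ^ 2 * cmvZeta (n + 1) z := by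
  rcases Nat.even_or_odd n with h | h
  · simp [cmvZeta, h, Nat.not_odd_iff_even.2 h]
  · simp [cmvZeta, h, Nat.odd_add_one, sq]

lemma le_prod_mul_of_le_mul {N a : ℕ → ℝ} (ha : 0 ≤ a) (h : ∀ k, N k ≤ a k * N (k + 1))
    (K : ℕ) : N 0 ≤ (∏ i ∈ Finset.range K, a i) * N K := by
  induction K with
  | zero => simp
  | succ K ih =>
    calc N 0 ≤ (∏ i ∈ Finset.range K, a i) * N K := ih
      _ ≤ (∏ i ∈ Finset.range K, a i) * (a K * N (K + 1)) :=
        mul_le_mul_of_nonneg_left (h K) (Finset.prod_nonneg fun i _ => ha i)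
      _ = (∏ i ∈ Finset.range (K + 1), a i) * N (K + 1) := by rw [Finset.prod_range_succ]; ring

namespace IsJostSolution

variable {α : ℕ → ℂ} {F : ℂ → ℕ → ℂ × ℂ}

lemma apply_eq_step (hF : IsJostSolution α F) (z : ℂ) (k : ℕ) :
    F z k = ((F z (k + 1)).1 - α (k + 1) * cmvZeta (k + 1) z * (F z (k + 1)).2,
      -(conj (α (k + 1)) * cmvZeta (k + 1) z * (F z (k + 1)).1) +
        cmvZeta (k + 1) z ^ 2 * (F z (k + 1)).2) := by
  obtain ⟨hg, hh, e₁, e₂⟩ := hF.2 z k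
  obtain ⟨-, -, e₁', e₂'⟩ := hF.2 z (k + 1)
  have hidx : ∀ m, k + 1 + (m + 1) = k + 1 + 1 + m := fun m => by omega
  refine Prod.ext ?_ ?_
  · rw [e₁, (Summable.of_norm hg).tsum_eq_zero_add, e₁']
    ring_nf
  · rw [e₂, (Summable.of_norm hh).tsum_eq_zero_add, e₂']
    have hterm : ∀ m, z ^ (m + 1) * conj (α (k + 1 + (m + 1))) * cmvZeta (k + 1) z *
          (F z (k + 1 + (m + 1))).1 = cmvZeta (k + 1) z ^ 2 *
        (z ^ m * conj (α (k + 1 + 1 + m)) * cmvZeta (k + 1 + 1) z * (F z (k + 1 + 1 + m)).1) := by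
      intro m
      rw [hidx, pow_succ]
      linear_combination (z ^ m * conj (α (k + 1 + 1 + m)) * (F z (k + 1 + 1 + m)).1) *
        mul_cmvZeta z (k + 1)
    simp only [hterm, tsum_mul_left, add_zero, pow_zero]
    ring

lemma enorm2_le_mul_enorm2_succ (hF : IsJostSolution α F) {z : ℂ} (hz : 1 ≤ ‖z‖) (k : ℕ) :
    enorm2 (F z k) ≤ ‖z‖ ^ 2 * (1 + ‖α (k + 1)‖) * enorm2 (F z (k + 1)) := by
  set v := F z (k + 1)
  set ζ := cmvZeta (k + 1) z
  have hζ : ‖ζ‖ ≤ ‖z‖ := norm_cmvZeta_le hz _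
  have hζ2 : ‖ζ‖ ≤ ‖z‖ ^ 2 := hζ.trans (le_self_pow₀ hz two_ne_zero)
  have hr : 0 ≤ ‖z‖ ^ 2 := sq_nonneg _
  have hdiag : enorm2 (v.1, ζ ^ 2 * v.2) ≤ ‖z‖ ^ 2 * enorm2 v :=
    enorm2_le_mul_of_le hr (le_mul_of_one_le_left (norm_nonneg _) (one_le_pow₀ hz))
      (by rw [norm_mul, norm_pow]; gcongr)
  have hoff : enorm2 (-(α (k + 1) * ζ * v.2), -(conj (α (k + 1)) * ζ * v.1)) ≤
      ‖α (k + 1)‖ * ‖z‖ ^ 2 * enorm2 v := by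
    rw [← enorm2_swap]
    refine enorm2_le_mul_of_le (by positivity) ?_ ?_ <;>
      simp only [Prod.fst_swap, Prod.snd_swap, norm_neg, norm_mul, Complex.norm_conj] <;> gcongr
  calc enorm2 (F z k)
      = enorm2 ((v.1, ζ ^ 2 * v.2) + (-(α (k + 1) * ζ * v.2), -(conj (α (k + 1)) * ζ * v.1))) := by
        rw [hF.apply_eq_step z k]
        refine congrArg enorm2 (Prod.ext ?_ ?_) <;> simp only [Prod.fst_add, Prod.snd_add] <;> ring
    _ ≤ ‖z‖ ^ 2 * enorm2 v + ‖α (k + 1)‖ * ‖z‖ ^ 2 * enorm2 v :=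
        (enorm2_add_le _ _).trans (add_le_add hdiag hoff)
    _ = ‖z‖ ^ 2 * (1 + ‖α (k + 1)‖) * enorm2 v := by ring

lemma enorm2_le_one_add_tailSum (hF : IsJostSolution α F) {z : ℂ} (hz : 1 ≤ ‖z‖)
    {d : ℕ → ℝ} (hd0 : 0 ≤ d) (hd : Summable d) (k : ℕ)
    (hαd : ∀ m, ‖α (k + 1 + m)‖ * ‖z‖ ^ (m + 1) ≤ d (k + 1 + m)) :
    enorm2 (F z k) ≤ 1 + tailSum (d * fun n => enorm2 (F z n)) k := by
  obtain ⟨M, hM⟩ := hF.1 z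
  obtain ⟨hg, hh, e₁, e₂⟩ := hF.2 z k
  set v : ℕ → ℂ × ℂ := fun m =>
    (α (k + 1 + m) * cmvZeta (k + 1 + m) z * (F z (k + 1 + m)).2,
      z ^ m * conj (α (k + 1 + m)) * cmvZeta (k + 1) z * (F z (k + 1 + m)).1)
  have hv : HasSum v ((1, 0) - F z k) := by
    convert (Summable.of_norm hg).hasSum.prodMk (Summable.of_norm hh).hasSum using 1
    refine Prod.ext ?_ ?_ <;> simp [e₁, e₂]
  have hvd : ∀ m, enorm2 (v m) ≤ d (k + 1 + m) * enorm2 (F z (k + 1 + m)) := by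
    intro m
    have hcoef₁ : ‖z‖ ^ m * ‖α (k + 1 + m)‖ * ‖cmvZeta (k + 1) z‖ ≤ d (k + 1 + m) :=
      calc ‖z‖ ^ m * ‖α (k + 1 + m)‖ * ‖cmvZeta (k + 1) z‖
          ≤ ‖z‖ ^ m * ‖α (k + 1 + m)‖ * ‖z‖ := by gcongr; exact norm_cmvZeta_le hz _
        _ = ‖α (k + 1 + m)‖ * ‖z‖ ^ (m + 1) := by ring
        _ ≤ d (k + 1 + m) := hαd m
    have hcoef₂ : ‖α (k + 1 + m)‖ * ‖cmvZeta (k + 1 + m) z‖ ≤ d (k + 1 + m) :=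
      calc ‖α (k + 1 + m)‖ * ‖cmvZeta (k + 1 + m) z‖ ≤ ‖α (k + 1 + m)‖ * ‖z‖ ^ (m + 1) := by
            gcongr
            exact (norm_cmvZeta_le hz _).trans (le_self_pow₀ hz m.succ_ne_zero)
        _ ≤ d (k + 1 + m) := hαd m
    rw [← enorm2_swap]
    refine enorm2_le_mul_of_le (hd0 _) ?_ ?_ <;>
      simp only [v, Prod.fst_swap, Prod.snd_swap, norm_mul, norm_pow, Complex.norm_conj]
    · exact mul_le_mul_of_nonneg_right hcoef₁ (norm_nonneg _)
    · exact mul_le_mul_of_nonneg_right hcoef₂ (norm_nonneg _)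
  have hsum := (summable_mul_of_bounded hd0 hd (fun n => enorm2_nonneg (F z n)) hM).comp_add_left
    (k + 1)
  calc enorm2 (F z k) = enorm2 ((1, 0) - ((1, 0) - F z k)) := by rw [sub_sub_cancel]
    _ ≤ enorm2 (1, 0) + enorm2 ((1, 0) - F z k) := enorm2_sub_le _ _
    _ ≤ 1 + tailSum (d * fun n => enorm2 (F z n)) k := by
      have h10 : enorm2 (1, 0) = 1 := by simp [enorm2]
      rw [h10, tailSum]
      gcongr
      have hvsum : Summable fun m => enorm2 (v m) :=
        hsum.of_nonneg_of_le (fun m => enorm2_nonneg _) hvd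
      exact (hv.enorm2_le hvsum).trans (hvsum.tsum_le_tsum hvd hsum)

lemma enorm2_le_exp_of_decay (hF : IsJostSolution α F) {z : ℂ} (hz : 1 ≤ ‖z‖) {C : ℝ}
    (hC : 0 ≤ C) {K : ℕ} (hdecay : ∀ n, K < n → ‖α n‖ * ‖z‖ ^ (2 * n) ≤ C * (1 / 2) ^ n) :
    enorm2 (F z K) ≤ Real.exp (C * (1 / 2) ^ K) := by
  obtain ⟨M, hM⟩ := hF.1 z
  set d : ℕ → ℝ := fun n => C * (1 / 2) ^ n
  have hd0 : 0 ≤ d := fun n => by positivity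
  have hd : Summable d := summable_geometric_two.mul_left C
  have hdK : tailSum d K = C * (1 / 2) ^ K := by
    simp only [tailSum, d, pow_add, ← mul_assoc]
    rw [tsum_mul_left, tsum_geometric_two]
    ring
  rw [← hdK]
  refine le_exp_tailSum_of_le_one_add_tailSum hd0 hd (fun n => enorm2_nonneg _) hM fun k hk =>
    hF.enorm2_le_one_add_tailSum hz hd0 hd k fun m => ?_
  exact (mul_le_mul_of_nonneg_left (pow_le_pow_right₀ hz (by omega)) (norm_nonneg _)).trans
    (hdecay _ (by omega))

lemma enorm2_zero_le (hF : IsJostSolution α F) {z : ℂ} (hz : 1 ≤ ‖z‖) (K : ℕ) :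
    enorm2 (F z 0) ≤
      (‖z‖ ^ 2) ^ K * (∏ i ∈ Finset.range K, (1 + ‖α (i + 1)‖)) * enorm2 (F z K) := by
  have h := le_prod_mul_of_le_mul (fun i => by positivity) (hF.enorm2_le_mul_enorm2_succ hz) K
  rwa [Finset.prod_mul_distrib, Finset.prod_const, Finset.card_range] at h

end IsJostSolution

/-- Past `n > (log ρ) ^ (1 / (γ - 1))` one has `n log ρ < n ^ γ`, so the decay beats `ρ ^ n`. -/
lemma SuperExpDecay.norm_mul_pow_le {γ C : ℝ} {α : ℕ → ℂ} (hα : SuperExpDecay γ C α)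
    (hγ : 1 < γ) {ρ : ℝ} (hρ : 1 ≤ ρ) {n : ℕ} (hn : ⌊Real.log ρ ^ (1 / (γ - 1))⌋₊ < n) :
    ‖α n‖ * ρ ^ n ≤ C := by
  set L := Real.log ρ
  have hL : 0 ≤ L := Real.log_nonneg hρ
  have hn1 : 1 ≤ n := by omega
  have hnpos : (0 : ℝ) < n := by exact_mod_cast hn1
  have hLn : L < (n : ℝ) ^ (γ - 1) :=
    calc L = (L ^ (1 / (γ - 1))) ^ (γ - 1) := by
          rw [← Real.rpow_mul hL, one_div_mul_cancel (by linarith), Real.rpow_one]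
      _ < (n : ℝ) ^ (γ - 1) :=
          Real.rpow_lt_rpow (Real.rpow_nonneg hL _) ((Nat.floor_lt (Real.rpow_nonneg hL _)).1 hn)
            (by linarith)
  have hpow : ρ ^ n ≤ Real.exp ((n : ℝ) ^ γ) :=
    calc ρ ^ n = Real.exp (n * L) := by rw [Real.exp_nat_mul, Real.exp_log (by linarith)]
      _ ≤ Real.exp ((n : ℝ) ^ γ) := by
          rw [← sub_add_cancel γ 1, Real.rpow_add_one hnpos.ne', mul_comm]
          gcongr
  have hαn := hα n hn1
  calc ‖α n‖ * ρ ^ n ≤ C * Real.exp (-(n : ℝ) ^ γ) * Real.exp ((n : ℝ) ^ γ) :=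
        mul_le_mul hαn hpow (by positivity) ((norm_nonneg _).trans hαn)
    _ = C := by rw [mul_assoc, ← Real.exp_add, neg_add_cancel, Real.exp_zero, mul_one]

lemma SuperExpDecay.summable_norm {γ C : ℝ} {α : ℕ → ℂ} (hα : SuperExpDecay γ C α)
    (hγ : 1 < γ) : Summable fun n => ‖α n‖ := by
  refine (summable_geometric_two.mul_left C).of_norm_bounded_eventually_nat ?_
  filter_upwards [eventually_gt_atTop ⌊Real.log 2 ^ (1 / (γ - 1))⌋₊] with n hn
  rw [norm_norm]
  calc ‖α n‖ = ‖α n‖ * 2 ^ n * (1 / 2) ^ n := by rw [mul_assoc, ← mul_pow]; norm_num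
    _ ≤ C * (1 / 2) ^ n := by gcongr; exact hα.norm_mul_pow_le hγ one_le_two hn

lemma prod_range_one_add_le_tprod {a : ℕ → ℝ} (ha0 : 0 ≤ a) (ha : Summable a) (K : ℕ) :
    ∏ i ∈ Finset.range K, (1 + a i) ≤ ∏' n, (1 + a n) := by
  refine Monotone.ge_of_tendsto (monotone_nat_of_le_succ fun k => ?_)
    (Real.multipliable_one_add_of_summable ha).tendsto_prod_tprod_nat K
  rw [Finset.prod_range_succ]
  exact le_mul_of_one_le_right (Finset.prod_nonneg fun i _ => add_nonneg zero_le_one (ha0 i))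
    (le_add_of_nonneg_right (ha0 k))

lemma exp_add_two_mul_mul_log (C : ℝ) {r : ℝ} (hr : 0 < r) (K : ℕ) :
    Real.exp (C + 2 * K * Real.log r) = Real.exp C * (r ^ 2) ^ K := by
  rw [Real.exp_add, mul_comm 2, mul_assoc, Real.exp_nat_mul, ← Real.log_rpow hr,
    Real.exp_log (by positivity), Real.rpow_two]

theorem jost_solution_growth (γ C : ℝ) (hγ : 1 < γ) (hC : 0 < C)
    (α : ℕ → ℂ) (hα : SuperExpDecay γ C α)
    (F : ℂ → ℕ → ℂ × ℂ) (hF : IsJostSolution α F)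
    (z : ℂ) (hz : 1 ≤ ‖z‖) :
    enorm2 (F z 0) ≤
      Real.exp (C + 2 * (⌊(Real.log (2 * ‖z‖ ^ 2)) ^ ((1 : ℝ) / (γ - 1))⌋ : ℝ) *
          Real.log (‖z‖)) *
        ∏' n : ℕ, (1 + ‖α (n + 1)‖) := by
  set r := ‖z‖
  set K := ⌊Real.log (2 * r ^ 2) ^ ((1 : ℝ) / (γ - 1))⌋₊
  have hr2 : 1 ≤ 2 * r ^ 2 := by nlinarith
  have hdecay : ∀ n, K < n → ‖α n‖ * r ^ (2 * n) ≤ C * (1 / 2) ^ n := fun n hn =>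
    calc ‖α n‖ * r ^ (2 * n) = ‖α n‖ * (2 * r ^ 2) ^ n * (1 / 2) ^ n := by
          rw [mul_assoc, ← mul_pow, pow_mul]; congr 2; ring
      _ ≤ C * (1 / 2) ^ n := by gcongr; exact hα.norm_mul_pow_le hγ hr2 hn
  have htail : enorm2 (F z K) ≤ Real.exp C :=
    (hF.enorm2_le_exp_of_decay hz hC.le hdecay).trans <| Real.exp_le_exp.2 <|
      mul_le_of_le_one_right hC.le (pow_le_one₀ (by norm_num) (by norm_num))
  have hprod := prod_range_one_add_le_tprod (fun n => norm_nonneg _)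
    ((summable_nat_add_iff 1).2 (hα.summable_norm hγ)) K
  rw [← natCast_floor_eq_intCast_floor (Real.rpow_nonneg (Real.log_nonneg hr2) _),
    exp_add_two_mul_mul_log C (by positivity : 0 < r) K]
  calc enorm2 (F z 0)
      ≤ (r ^ 2) ^ K * (∏ i ∈ Finset.range K, (1 + ‖α (i + 1)‖)) * enorm2 (F z K) :=
        hF.enorm2_zero_le hz K
    _ ≤ (r ^ 2) ^ K * (∏' n, (1 + ‖α (n + 1)‖)) * Real.exp C := by
        gcongr
        · exact enorm2_nonneg _
        · exact mul_nonneg (by positivity) (tprod_nonneg fun n => by positivity)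
    _ = Real.exp C * (r ^ 2) ^ K * ∏' n, (1 + ‖α (n + 1)‖) := by ring
end

section
/- Let γ>1, C>0, Q>1, let α ∈ B₀(γ,C,Q), and let F be a Jost solution for α. Then for every z ∈ ℂ with |z| = 1, |F₁(z,0) − F₂(z,0)| ≥ ∏_{n=1}^∞ (1−|α_n|) ≥ 1/Q. -/
open Complex Filter
open scoped ComplexConjugate Topology

/-!
A Jost solution obeys the transfer relations `F₁(k) = F₁(k+1) - α_{k+1} ζ_{k+1} F₂(k+1)` and
`F₂(k) = ζ_{k+1}² F₂(k+1) - ζ_{k+1} ᾱ_{k+1} F₁(k+1)`. For `|z| = 1` there are unimodular phases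
`c_k`, with `c_0 = 1` and `c_{k+1}` a Möbius image of `c_k ζ_{k+1}`, such that
`D_k = F₁(k) - c_k F₂(k)` satisfies `D_k = (1 + c_k ζ_{k+1} ᾱ_{k+1}) D_{k+1}`; hence
`|D_k| ≥ (1 - |α_{k+1}|) |D_{k+1}|`. Since `|α|` is summable, `F(k) → (1, 0)`, so `D_k → 1` and
`|F₁(0) - F₂(0)| = |D_0| ≥ ∏ (1 - |α_n|)`.
-/

lemma one_sub_norm_le_norm_one_add {R : Type*} [SeminormedRing R] [NormOneClass R] (x : R) :
    1 - ‖x‖ ≤ ‖1 + x‖ := by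
  simpa using norm_sub_norm_le (1 : R) (-x)

lemma norm_add_div_one_add_mul_conj {w a : ℂ} (hw : ‖w‖ = 1) (ha : ‖a‖ < 1) :
    ‖(a + w) / (1 + w * conj a)‖ = 1 := by
  have hwc : w * conj w = 1 := by
    rw [Complex.mul_conj, Complex.normSq_eq_norm_sq, hw]; norm_num
  have hnum : a + w = w * conj (1 + w * conj a) := by
    simp only [map_add, map_one, map_mul, Complex.conj_conj]
    linear_combination (-a) * hwc
  have hden : 0 < ‖1 + w * conj a‖ := by
    have := one_sub_norm_le_norm_one_add (w * conj a)
    rw [norm_mul, hw, Complex.norm_conj, one_mul] at this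
    linarith
  rw [hnum, norm_div, norm_mul, hw, Complex.norm_conj, one_mul, div_self hden.ne']

lemma prod_range_mul_le_of_mul_succ_le {r x : ℕ → ℝ} (hr : ∀ k, 0 ≤ r k)
    (h : ∀ k, r k * x (k + 1) ≤ x k) (m : ℕ) : (∏ k ∈ Finset.range m, r k) * x m ≤ x 0 := by
  induction m with
  | zero => simp
  | succ m ih =>
    calc (∏ k ∈ Finset.range (m + 1), r k) * x (m + 1)
        = (∏ k ∈ Finset.range m, r k) * (r m * x (m + 1)) := by
          rw [Finset.prod_range_succ, mul_assoc]
      _ ≤ (∏ k ∈ Finset.range m, r k) * x m :=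
          mul_le_mul_of_nonneg_left (h m) (Finset.prod_nonneg fun k _ => hr k)
      _ ≤ x 0 := ih

lemma tprod_mul_le_of_mul_succ_le {r x : ℕ → ℝ} {L : ℝ} (hr : ∀ k, 0 ≤ r k)
    (hmul : Multipliable r) (hx : Tendsto x atTop (𝓝 L)) (h : ∀ k, r k * x (k + 1) ≤ x k) :
    (∏' k, r k) * L ≤ x 0 :=
  le_of_tendsto' (hmul.hasProd.tendsto_prod_nat.mul hx) (prod_range_mul_le_of_mul_succ_le hr h)

lemma summable_exp_neg_rpow_succ {γ : ℝ} (hγ : 1 ≤ γ) :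
    Summable fun n : ℕ => Real.exp (-((n + 1 : ℕ) : ℝ) ^ γ) := by
  refine ((summable_nat_add_iff 1).2 Real.summable_exp_neg_nat).of_nonneg_of_le
    (fun n => (Real.exp_pos _).le) fun n => Real.exp_le_exp.2 (neg_le_neg ?_)
  exact Real.self_le_rpow_of_one_le (by simp) hγ

lemma SuperExpDecay.summable_norm_succ {γ C : ℝ} {α : ℕ → ℂ} (hα : SuperExpDecay γ C α)
    (hγ : 1 ≤ γ) : Summable fun n => ‖α (n + 1)‖ :=
  ((summable_exp_neg_rpow_succ hγ).mul_left C).of_nonneg_of_le (fun _ => norm_nonneg _)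
    fun n => hα (n + 1) (Nat.le_add_left 1 n)

lemma norm_fst_le_enorm2 (v : ℂ × ℂ) : ‖v.1‖ ≤ enorm2 v :=
  Real.le_sqrt_of_sq_le (le_add_of_nonneg_right (sq_nonneg _))

lemma norm_snd_le_enorm2 (v : ℂ × ℂ) : ‖v.2‖ ≤ enorm2 v :=
  Real.le_sqrt_of_sq_le (le_add_of_nonneg_left (sq_nonneg _))

lemma norm_cmvZeta {z : ℂ} (hz : ‖z‖ = 1) (n : ℕ) : ‖cmvZeta n z‖ = 1 := by
  unfold cmvZeta
  split_ifs <;> simp [hz]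

noncomputable section

def jostPhase (α : ℕ → ℂ) (z : ℂ) : ℕ → ℂ
  | 0 => 1
  | k + 1 => cmvZeta (k + 1) z * (α (k + 1) + jostPhase α z k * cmvZeta (k + 1) z) /
      (1 + jostPhase α z k * cmvZeta (k + 1) z * conj (α (k + 1)))

def jostPhasedDiff (α : ℕ → ℂ) (F : ℂ → ℕ → ℂ × ℂ) (z : ℂ) (k : ℕ) : ℂ :=
  (F z k).1 - jostPhase α z k * (F z k).2

end

lemma norm_jostPhase {α : ℕ → ℂ} {z : ℂ} (hz : ‖z‖ = 1) (hα : ∀ k, ‖α (k + 1)‖ < 1) (k : ℕ) :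
    ‖jostPhase α z k‖ = 1 := by
  induction k with
  | zero => simp [jostPhase]
  | succ k ih =>
    rw [jostPhase, mul_div_assoc, norm_mul, norm_cmvZeta hz, one_mul]
    exact norm_add_div_one_add_mul_conj (by rw [norm_mul, ih, norm_cmvZeta hz, one_mul]) (hα k)

lemma one_sub_norm_le_norm_one_add_jostPhase_mul {α : ℕ → ℂ} {z : ℂ} (hz : ‖z‖ = 1)
    (hα : ∀ k, ‖α (k + 1)‖ < 1) (k : ℕ) :
    1 - ‖α (k + 1)‖ ≤ ‖1 + jostPhase α z k * cmvZeta (k + 1) z * conj (α (k + 1))‖ := by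
  simpa [norm_jostPhase hz hα, norm_cmvZeta hz] using
    one_sub_norm_le_norm_one_add (jostPhase α z k * cmvZeta (k + 1) z * conj (α (k + 1)))

namespace IsJostSolution

variable {α : ℕ → ℂ} {F : ℂ → ℕ → ℂ × ℂ} {z : ℂ}

lemma fst_eq (hF : IsJostSolution α F) (k : ℕ) :
    (F z k).1 = (F z (k + 1)).1 - α (k + 1) * cmvZeta (k + 1) z * (F z (k + 1)).2 := by
  obtain ⟨hsum, -, hk, -⟩ := hF.2 z k
  have htail : ∑' n : ℕ, α (k + 1 + (n + 1)) * cmvZeta (k + 1 + (n + 1)) z *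
      (F z (k + 1 + (n + 1))).2 = 1 - (F z (k + 1)).1 := by
    rw [(hF.2 z (k + 1)).2.2.1, sub_sub_cancel]
    exact tsum_congr fun n => by rw [show k + 1 + (n + 1) = k + 1 + 1 + n by omega]
  rw [hk, (Summable.of_norm hsum).tsum_eq_zero_add, htail, add_zero]
  ring

lemma snd_eq (hF : IsJostSolution α F) (k : ℕ) :
    (F z k).2 = cmvZeta (k + 1) z ^ 2 * (F z (k + 1)).2 -
      cmvZeta (k + 1) z * conj (α (k + 1)) * (F z (k + 1)).1 := by
  obtain ⟨-, hsum, -, hk⟩ := hF.2 z k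
  have htail : ∑' n : ℕ, z ^ (n + 1) * conj (α (k + 1 + (n + 1))) * cmvZeta (k + 1) z *
      (F z (k + 1 + (n + 1))).1 = - cmvZeta (k + 1) z ^ 2 * (F z (k + 1)).2 := by
    rw [(hF.2 z (k + 1)).2.2.2, neg_mul_neg, ← tsum_mul_left]
    refine tsum_congr fun n => ?_
    rw [show k + 1 + (n + 1) = k + 1 + 1 + n by omega, pow_succ]
    linear_combination z ^ n * conj (α (k + 1 + 1 + n)) * (F z (k + 1 + 1 + n)).1 *
      mul_cmvZeta z (k + 1)
  rw [hk, (Summable.of_norm hsum).tsum_eq_zero_add, htail]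
  simp only [pow_zero, one_mul, add_zero]
  ring

lemma jostPhasedDiff_eq (hF : IsJostSolution α F) (k : ℕ)
    (hden : 1 + jostPhase α z k * cmvZeta (k + 1) z * conj (α (k + 1)) ≠ 0) :
    jostPhasedDiff α F z k = (1 + jostPhase α z k * cmvZeta (k + 1) z * conj (α (k + 1))) *
      jostPhasedDiff α F z (k + 1) := by
  have hphase : jostPhase α z (k + 1) *
      (1 + jostPhase α z k * cmvZeta (k + 1) z * conj (α (k + 1))) =
      cmvZeta (k + 1) z * (α (k + 1) + jostPhase α z k * cmvZeta (k + 1) z) :=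
    div_mul_cancel₀ _ hden
  rw [jostPhasedDiff, jostPhasedDiff, hF.fst_eq k, hF.snd_eq k]
  linear_combination (F z (k + 1)).2 * hphase

lemma mul_norm_jostPhasedDiff_succ_le (hF : IsJostSolution α F) (hz : ‖z‖ = 1)
    (hα : ∀ k, ‖α (k + 1)‖ < 1) (k : ℕ) :
    (1 - ‖α (k + 1)‖) * ‖jostPhasedDiff α F z (k + 1)‖ ≤ ‖jostPhasedDiff α F z k‖ := by
  have hden := one_sub_norm_le_norm_one_add_jostPhase_mul hz hα k
  have hden_ne : 1 + jostPhase α z k * cmvZeta (k + 1) z * conj (α (k + 1)) ≠ 0 :=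
    norm_pos_iff.1 ((sub_pos.2 (hα k)).trans_le hden)
  rw [hF.jostPhasedDiff_eq k hden_ne, norm_mul]
  exact mul_le_mul_of_nonneg_right hden (norm_nonneg _)

lemma norm_fst_sub_one_le (hF : IsJostSolution α F) (hz : ‖z‖ = 1) {M : ℝ}
    (hM : ∀ k, enorm2 (F z k) ≤ M) (hsum : Summable fun n => ‖α (n + 1)‖) (m : ℕ) :
    ‖(F z m).1 - 1‖ ≤ M * ∑' n, ‖α (n + m + 1)‖ := by
  rw [(hF.2 z m).2.2.1, sub_sub_cancel_left, norm_neg]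
  refine tsum_of_norm_bounded (((summable_nat_add_iff m).2 hsum).hasSum.mul_left M) fun n => ?_
  rw [norm_mul, norm_mul, norm_cmvZeta hz, mul_one, show m + 1 + n = n + m + 1 by omega,
    mul_comm M]
  exact mul_le_mul_of_nonneg_left ((norm_snd_le_enorm2 _).trans (hM _)) (norm_nonneg _)

lemma norm_snd_le (hF : IsJostSolution α F) (hz : ‖z‖ = 1) {M : ℝ}
    (hM : ∀ k, enorm2 (F z k) ≤ M) (hsum : Summable fun n => ‖α (n + 1)‖) (m : ℕ) :
    ‖(F z m).2‖ ≤ M * ∑' n, ‖α (n + m + 1)‖ := by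
  rw [(hF.2 z m).2.2.2, norm_neg]
  refine tsum_of_norm_bounded (((summable_nat_add_iff m).2 hsum).hasSum.mul_left M) fun n => ?_
  rw [norm_mul, norm_mul, norm_mul, norm_pow, hz, one_pow, one_mul, norm_cmvZeta hz, mul_one,
    Complex.norm_conj, show m + 1 + n = n + m + 1 by omega, mul_comm M]
  exact mul_le_mul_of_nonneg_left ((norm_fst_le_enorm2 _).trans (hM _)) (norm_nonneg _)

lemma tendsto_jostPhasedDiff (hF : IsJostSolution α F) (hz : ‖z‖ = 1)
    (hα : ∀ k, ‖α (k + 1)‖ < 1) (hsum : Summable fun n => ‖α (n + 1)‖) :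
    Tendsto (jostPhasedDiff α F z) atTop (𝓝 1) := by
  obtain ⟨M, hM⟩ := hF.1 z
  have htail : Tendsto (fun m => 2 * M * ∑' n, ‖α (n + m + 1)‖) atTop (𝓝 0) := by
    simpa using (tendsto_sum_nat_add fun n => ‖α (n + 1)‖).const_mul (2 * M)
  refine tendsto_iff_norm_sub_tendsto_zero.2 <|
    squeeze_zero (fun _ => norm_nonneg _) (fun m => ?_) htail
  calc ‖jostPhasedDiff α F z m - 1‖
      = ‖((F z m).1 - 1) - jostPhase α z m * (F z m).2‖ := by rw [jostPhasedDiff, sub_right_comm]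
    _ ≤ ‖(F z m).1 - 1‖ + ‖(F z m).2‖ := by
        simpa [norm_jostPhase hz hα] using
          norm_sub_le ((F z m).1 - 1) (jostPhase α z m * (F z m).2)
    _ ≤ 2 * M * ∑' n, ‖α (n + m + 1)‖ := by
        linarith [hF.norm_fst_sub_one_le hz hM hsum m, hF.norm_snd_le hz hM hsum m]

end IsJostSolution

theorem jost_function_lower_bound_general (γ C Q : ℝ) (hγ : 1 < γ)
    (α : ℕ → ℂ) (hα : MemB0 γ C Q α)
    (F : ℂ → ℕ → ℂ × ℂ) (hF : IsJostSolution α F)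
    (z : ℂ) (hz : ‖z‖ = 1) :
    (∏' n : ℕ, (1 - ‖α (n + 1)‖)) ≤ ‖(F z 0).1 - (F z 0).2‖ ∧
    1 / Q ≤ ∏' n : ℕ, (1 - ‖α (n + 1)‖) := by
  obtain ⟨hlt, hdecay, hQ⟩ := hα
  have hlt' : ∀ k, ‖α (k + 1)‖ < 1 := fun k => hlt (k + 1) (Nat.le_add_left 1 k)
  have hsum := hdecay.summable_norm_succ hγ.le
  have hmul : Multipliable fun n => 1 - ‖α (n + 1)‖ := by
    simpa [sub_eq_add_neg] using Real.multipliable_one_add_of_summable hsum.neg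
  refine ⟨?_, hQ⟩
  simpa [jostPhasedDiff, jostPhase] using
    tprod_mul_le_of_mul_succ_le (fun k => sub_nonneg.2 (hlt' k).le) hmul
      (hF.tendsto_jostPhasedDiff hz hlt' hsum).norm (hF.mul_norm_jostPhasedDiff_succ_le hz hlt')

theorem jost_function_lower_bound (γ C Q : ℝ) (hγ : 1 < γ) (hC : 0 < C) (hQ : 1 < Q)
    (α : ℕ → ℂ) (hα : MemB0 γ C Q α)
    (F : ℂ → ℕ → ℂ × ℂ) (hF : IsJostSolution α F)
    (z : ℂ) (hz : ‖z‖ = 1) :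
    (∏' n : ℕ, (1 - ‖α (n + 1)‖)) ≤ ‖(F z 0).1 - (F z 0).2‖ ∧
    1 / Q ≤ ∏' n : ℕ, (1 - ‖α (n + 1)‖) :=
  jost_function_lower_bound_general γ C Q hγ α hα F hF z hz
end

section
/- Let p ≥ 1 and B ≥ 0. There exists a constant A₂ ≥ 0, depending only on p and B, such that for every entire function f with f(0) = 1, with no zeros in the closed unit disk {z : |z| ≤ 1}, and with log|f(z)| ≤ B + (log(2|z|²))^p for all |z| ≥ 1, and for every R ≥ 2, one has Σ_{w : f(w)=0, |w| ≥ R} m(w)/|w| ≤ A₂·(log R)^p / R, where m(w) denotes the multiplicity of the zero w and the (countable) sum over all zeros of f of modulus at least R converges. -/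
open Complex Filter
open scoped ComplexConjugate Topology

/-!
By Jensen's inequality on the circle of radius `2r`, the zeros of modulus at most `r = 2^(k+1) R`
have total multiplicity at most `(B + log (8 r²) ^ p) / log 2 = O((k + 1) ^ p (log R) ^ p)`.
Sorting the zeros of modulus `≥ R` into the dyadic shells `2^k R ≤ |w| < 2^(k+1) R`, shell `k`
contributes at most this count divided by `2^k R`, and `∑ (k + 1) ^ p / 2 ^ k` converges.
-/
theorem summable_add_one_rpow_div_two_pow (p : ℝ) :
    Summable fun k : ℕ => ((k : ℝ) + 1) ^ p / 2 ^ k := by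
  have hpow : Summable fun k : ℕ => ((k : ℝ) + 1) ^ ⌈p⌉₊ / 2 ^ k := by
    have h := (summable_nat_add_iff 1).mpr
      (summable_pow_mul_geometric_of_norm_lt_one ⌈p⌉₊ (r := (1 / 2 : ℝ)) (by norm_num))
    refine (h.mul_left 2).congr fun k => ?_
    push_cast
    ring_nf
    norm_num
  refine hpow.of_nonneg_of_le (fun k => by positivity) fun k => ?_
  gcongr
  calc ((k : ℝ) + 1) ^ p ≤ ((k : ℝ) + 1) ^ (⌈p⌉₊ : ℝ) :=
        Real.rpow_le_rpow_of_exponent_le (by linarith [k.cast_nonneg (α := ℝ)]) (Nat.le_ceil p)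
    _ = ((k : ℝ) + 1) ^ ⌈p⌉₊ := Real.rpow_natCast _ _

theorem Finset.sum_le_finsum {ι M : Type*} [AddCommMonoid M] [PartialOrder M]
    [IsOrderedAddMonoid M] {f : ι → M} (hf : 0 ≤ f) (hfin : (Function.support f).Finite)
    (s : Finset ι) : ∑ i ∈ s, f i ≤ ∑ᶠ i, f i := by
  classical
  rw [finsum_eq_sum_of_support_subset f (s := s ∪ hfin.toFinset) (by simp)]
  exact Finset.sum_le_sum_of_subset_of_nonneg Finset.subset_union_left fun i _ _ => hf i

theorem HasZeroOrder.analyticOrderAt_eq {f : ℂ → ℂ} {w : ℂ} {k : ℕ} (hf : AnalyticAt ℂ f w)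
    (h : HasZeroOrder f w k) : analyticOrderAt f w = k :=
  hf.analyticOrderAt_eq_natCast.mpr h

section NatLogFloor

variable {K : Type*} [Semifield K] [LinearOrder K] [IsStrictOrderedRing K] [FloorSemiring K]

theorem pow_natLog_floor_le {x : K} {b : ℕ} (hb : 1 < b) (hx : 1 ≤ x) :
    (b : K) ^ Nat.log b ⌊x⌋₊ ≤ x := by
  have h := Int.zpow_log_le_self hb (zero_lt_one.trans_le hx)
  rwa [Int.log_of_one_le_right _ hx, zpow_natCast] at h

theorem lt_pow_natLog_floor_succ {x : K} {b : ℕ} (hb : 1 < b) (hx : 1 ≤ x) :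
    x < (b : K) ^ (Nat.log b ⌊x⌋₊ + 1) := by
  have h := Int.lt_zpow_succ_log_self hb x
  rwa [Int.log_of_one_le_right _ hx, ← Nat.cast_succ, zpow_natCast] at h

end NatLogFloor

open Metric MeromorphicOn in
theorem sum_zeroOrder_le_log_div_log {f : ℂ → ℂ} (hf : Differentiable ℂ f) (hf0 : f 0 ≠ 0)
    {m : ℂ → ℕ} (hm : ∀ w, HasZeroOrder f w (m w)) {r ρ M : ℝ} (hr : 0 < r) (hrρ : r < ρ)
    (hM : 1 ≤ M) (hfM : ∀ z : ℂ, ‖z‖ = ρ → ‖f z‖ ≤ M) (T : Finset ℂ)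
    (hT : ∀ w ∈ T, ‖w‖ ≤ r) :
    ∑ w ∈ T, (m w : ℝ) ≤ Real.log (M / ‖f 0‖) / Real.log (ρ / r) := by
  have han : ∀ s, AnalyticOnNhd ℂ f s := fun s z _ => hf.analyticAt z
  have hρ : |ρ| = ρ := abs_of_pos (hr.trans hrρ)
  have jensen := (han (closedBall 0 |ρ|)).sum_divisor_le (r := r) (by positivity)
    (by rwa [abs_of_pos hr, hρ]) hM hf0 (fun z hz => hfM z (by simpa [hρ] using hz))
  have hdiv : ∀ w ∈ T, (m w : ℤ) = divisor f (closedBall 0 |r|) w := by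
    intro w hw
    rw [AnalyticOnNhd.divisor_apply (han _) (by simpa [abs_of_pos hr] using hT w hw),
      (hm w).analyticOrderAt_eq (hf.analyticAt w)]
    simp
  calc ∑ w ∈ T, (m w : ℝ)
        = ((∑ w ∈ T, divisor f (closedBall 0 |r|) w : ℤ) : ℝ) := by
        rw [Int.cast_sum]
        refine Finset.sum_congr rfl fun w hw => ?_
        rw [← hdiv w hw, Int.cast_natCast]
    _ ≤ ((∑ᶠ u, divisor f (closedBall 0 |r|) u : ℤ) : ℝ) := by
        exact_mod_cast Finset.sum_le_finsum (AnalyticOnNhd.divisor_nonneg (han _))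
          ((divisor f _).finiteSupport (isCompact_closedBall 0 |r|)) T
    _ ≤ _ := jensen

theorem sum_div_norm_le_tsum_div_two_pow {E : Type*} [Norm E] {T : Finset E} {R : ℝ}
    (hR : 0 < R) (hT : ∀ w ∈ T, R ≤ ‖w‖) {a : E → ℝ} (ha : ∀ w, 0 ≤ a w) {N : ℕ → ℝ}
    (hN : ∀ k, ∑ w ∈ T with ‖w‖ ≤ 2 ^ (k + 1) * R, a w ≤ N k)
    (hNs : Summable fun k => N k / 2 ^ k) :
    ∑ w ∈ T, a w / ‖w‖ ≤ (∑' k, N k / 2 ^ k) / R := by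
  classical
  set κ : E → ℕ := fun w => Nat.log 2 ⌊‖w‖ / R⌋₊
  have hshell : ∀ w ∈ T, 2 ^ κ w * R ≤ ‖w‖ ∧ ‖w‖ ≤ 2 ^ (κ w + 1) * R := by
    intro w hw
    have hx : 1 ≤ ‖w‖ / R := (one_le_div hR).mpr (hT w hw)
    have hlow := pow_natLog_floor_le one_lt_two hx
    have hupp := lt_pow_natLog_floor_succ one_lt_two hx
    push_cast at hlow hupp
    exact ⟨(le_div_iff₀ hR).mp hlow, ((div_lt_iff₀ hR).mp hupp).le⟩
  have hN0 : ∀ k, 0 ≤ N k / 2 ^ k := fun k =>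
    div_nonneg ((Finset.sum_nonneg fun w _ => ha w).trans (hN k)) (by positivity)
  calc ∑ w ∈ T, a w / ‖w‖ = ∑ k ∈ T.image κ, ∑ w ∈ T with κ w = k, a w / ‖w‖ :=
        (Finset.sum_fiberwise_of_maps_to (fun w hw => Finset.mem_image_of_mem κ hw) _).symm
    _ ≤ ∑ k ∈ T.image κ, ∑ w ∈ T with ‖w‖ ≤ 2 ^ (k + 1) * R, a w / (2 ^ k * R) := by
        gcongr with k
        calc ∑ w ∈ T with κ w = k, a w / ‖w‖
            ≤ ∑ w ∈ T with κ w = k, a w / (2 ^ k * R) := by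
              refine Finset.sum_le_sum fun w hw => ?_
              obtain ⟨hwT, rfl⟩ := Finset.mem_filter.mp hw
              gcongr
              · exact ha w
              · exact (hshell w hwT).1
          _ ≤ ∑ w ∈ T with ‖w‖ ≤ 2 ^ (k + 1) * R, a w / (2 ^ k * R) := by
              refine Finset.sum_le_sum_of_subset_of_nonneg ?_ fun w _ _ => by
                have := ha w; positivity
              intro w hw
              obtain ⟨hwT, rfl⟩ := Finset.mem_filter.mp hw
              exact Finset.mem_filter.mpr ⟨hwT, (hshell w hwT).2⟩
    _ ≤ ∑ k ∈ T.image κ, N k / 2 ^ k / R := by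
        gcongr with k
        rw [← Finset.sum_div, div_div]
        gcongr
        exact hN k
    _ ≤ (∑' k, N k / 2 ^ k) / R := by
        rw [← Finset.sum_div]
        gcongr
        exact hNs.sum_le_tsum _ fun k _ => hN0 k

theorem log_two_mul_sq_two_pow_mul_le {R : ℝ} (hR : 2 ≤ R) (k : ℕ) :
    Real.log (2 * (2 ^ (k + 2) * R) ^ 2) ≤ 7 * ((k : ℝ) + 1) * Real.log R := by
  have hlog : Real.log 2 ≤ Real.log R := Real.log_le_log two_pos hR
  have hlog2 : 0 < Real.log 2 := Real.log_pos one_lt_two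
  rw [show 2 * (2 ^ (k + 2) * R) ^ 2 = (2 : ℝ) ^ (2 * k + 5) * R ^ 2 by ring,
    Real.log_mul (by positivity) (by positivity), Real.log_pow, Real.log_pow]
  push_cast
  nlinarith [k.cast_nonneg (α := ℝ)]

theorem sum_zeroOrder_le_of_log_norm_le {p B R : ℝ} (hp : 0 ≤ p) (hB : 0 ≤ B) (hR : 2 ≤ R)
    {f : ℂ → ℂ} (hf : Differentiable ℂ f) (hf0 : f 0 = 1)
    (hgrowth : ∀ z : ℂ, 1 ≤ ‖z‖ → Real.log ‖f z‖ ≤ B + Real.log (2 * ‖z‖ ^ 2) ^ p)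
    {m : ℂ → ℕ} (hm : ∀ w, HasZeroOrder f w (m w)) (k : ℕ) (T : Finset ℂ)
    (hT : ∀ w ∈ T, ‖w‖ ≤ 2 ^ (k + 1) * R) :
    ∑ w ∈ T, (m w : ℝ) ≤
      (B / Real.log 2 ^ p + 7 ^ p) / Real.log 2 * Real.log R ^ p * ((k : ℝ) + 1) ^ p := by
  set ρ : ℝ := 2 ^ (k + 2) * R
  have hlog2 : 0 < Real.log 2 := Real.log_pos one_lt_two
  have hρ : 1 ≤ ρ := by
    have : (1 : ℝ) ≤ 2 ^ (k + 2) := one_le_pow₀ one_le_two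
    nlinarith
  have hexponent : 0 ≤ B + Real.log (2 * ρ ^ 2) ^ p := by
    have : 0 ≤ Real.log (2 * ρ ^ 2) := Real.log_nonneg (by nlinarith)
    positivity
  have hjensen := sum_zeroOrder_le_log_div_log hf (by simp [hf0]) hm
    (r := 2 ^ (k + 1) * R) (ρ := ρ) (by positivity)
    (mul_lt_mul_of_pos_right (pow_lt_pow_right₀ one_lt_two (by omega)) (by linarith))
    (Real.one_le_exp hexponent)
    (fun z hz => Real.le_exp_of_log_le (by simpa [hz] using hgrowth z (hρ.trans hz.ge))) T hT
  rw [hf0, norm_one, div_one, Real.log_exp,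
    show ρ / (2 ^ (k + 1) * R) = 2 by field_simp; ring] at hjensen
  refine hjensen.trans ?_
  rw [div_mul_eq_mul_div, div_mul_eq_mul_div, div_le_div_iff_of_pos_right hlog2]
  have hlogR : Real.log 2 ≤ Real.log R := Real.log_le_log two_pos hR
  have hL : Real.log 2 ^ p ≤ Real.log R ^ p := Real.rpow_le_rpow hlog2.le hlogR hp
  have hk : 1 ≤ ((k : ℝ) + 1) ^ p :=
    Real.one_le_rpow (by linarith [k.cast_nonneg (α := ℝ)]) hp
  calc B + Real.log (2 * ρ ^ 2) ^ p ≤ B + (7 * ((k : ℝ) + 1) * Real.log R) ^ p := by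
        gcongr
        · exact Real.log_nonneg (by nlinarith)
        · exact log_two_mul_sq_two_pow_mul_le hR k
    _ = B + 7 ^ p * Real.log R ^ p * ((k : ℝ) + 1) ^ p := by
        rw [Real.mul_rpow (by positivity) (by linarith),
          Real.mul_rpow (by norm_num) (by positivity)]
        ring
    _ ≤ B / Real.log 2 ^ p * Real.log R ^ p * ((k : ℝ) + 1) ^ p
          + 7 ^ p * Real.log R ^ p * ((k : ℝ) + 1) ^ p := by
        gcongr
        calc B = B / Real.log 2 ^ p * Real.log 2 ^ p := by
              field_simp
          _ ≤ B / Real.log 2 ^ p * Real.log R ^ p := by gcongr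
          _ ≤ _ := le_mul_of_one_le_right
            (mul_nonneg (by positivity) (Real.rpow_nonneg (hlog2.le.trans hlogR) p)) hk
    _ = _ := by ring

theorem large_zeros_reciprocal_sum_bound (p B : ℝ) (hp : 1 ≤ p) (hB : 0 ≤ B) :
    ∃ A₂ : ℝ, 0 ≤ A₂ ∧
      ∀ f : ℂ → ℂ, Differentiable ℂ f → f 0 = 1 →
        (∀ z : ℂ, ‖z‖ ≤ 1 → f z ≠ 0) →
        (∀ z : ℂ, 1 ≤ ‖z‖ →
          Real.log (‖f z‖) ≤ B + (Real.log (2 * ‖z‖ ^ 2)) ^ p) →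
        ∀ m : ℂ → ℕ, (∀ w : ℂ, HasZeroOrder f w (m w)) →
        ∀ R : ℝ, 2 ≤ R →
          Summable (fun w : ℂ => if R ≤ ‖w‖ then (m w : ℝ) / ‖w‖ else 0) ∧
          (∑' w : ℂ, if R ≤ ‖w‖ then (m w : ℝ) / ‖w‖ else 0) ≤
            A₂ * (Real.log R) ^ p / R := by
  set C : ℝ := (B / Real.log 2 ^ p + 7 ^ p) / Real.log 2
  set S : ℝ := ∑' k : ℕ, ((k : ℝ) + 1) ^ p / 2 ^ k
  have hC : 0 ≤ C := by have := Real.log_pos one_lt_two; positivity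
  refine ⟨C * S, mul_nonneg hC (tsum_nonneg fun k => by positivity), ?_⟩
  intro f hf hf0 _ hgrowth m hm R hR
  have hnonneg : 0 ≤ fun w : ℂ => if R ≤ ‖w‖ then (m w : ℝ) / ‖w‖ else 0 := fun w => by
    dsimp only
    split_ifs <;> positivity
  have hpartial : ∀ T : Finset ℂ,
      ∑ w ∈ T, (if R ≤ ‖w‖ then (m w : ℝ) / ‖w‖ else 0) ≤ C * S * Real.log R ^ p / R := by
    intro T
    rw [← Finset.sum_filter]
    calc ∑ w ∈ T with R ≤ ‖w‖, (m w : ℝ) / ‖w‖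
        ≤ (∑' k : ℕ, C * Real.log R ^ p * ((k : ℝ) + 1) ^ p / 2 ^ k) / R :=
          sum_div_norm_le_tsum_div_two_pow (by linarith)
            (fun w hw => (Finset.mem_filter.mp hw).2) (fun w => (m w).cast_nonneg)
            (fun k => sum_zeroOrder_le_of_log_norm_le (by linarith) hB hR hf hf0 hgrowth hm k _
              fun w hw => (Finset.mem_filter.mp hw).2)
            (by simpa only [mul_div_assoc] using
              (summable_add_one_rpow_div_two_pow p).mul_left (C * Real.log R ^ p))
      _ = C * S * Real.log R ^ p / R := by
          simp only [mul_div_assoc]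
          rw [tsum_mul_left]
          ring
  exact ⟨summable_of_sum_le hnonneg hpartial, Real.tsum_le_of_sum_le hnonneg hpartial⟩
end
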